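/- The function Q ↦ log det(I + s R Q) is concave on the set of Hermitian positive semidefinite matrices Q, for any fixed Hermitian positive semidefinite R and s > 0, when restricted to diagonal Q with nonnegative entries. -/

import Mathlib

open scoped ComplexOrder

open Matrix Finset

open scoped MatrixOrder

section aux

variable {n : Type*} [Fintype n] [DecidableEq n]

omit [DecidableEq n] in
lemma smul_posSemidef {A : Matrix n n ℂ} (hA : A.PosSemidef) {c : ℝ} (hc : 0 ≤ c) :
    (c • A).PosSemidef := by
  have hcast : c • A = (c : ℂ) • A := by
    ext i j; simp [Complex.real_smul]
  rw [hcast]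
  refine ⟨?_, fun x => ?_⟩
  · unfold Matrix.IsHermitian
    rw [conjTranspose_smul, hA.1]
    congr 1
    simp [Complex.ext_iff]
  · simpa [Finsupp.mul_sum, mul_assoc, mul_left_comm] using
      mul_nonneg (Complex.zero_le_real.mpr hc) (hA.2 x)

lemma det_real_of_posDef {A : Matrix n n ℂ} (hA : A.PosDef) :
    A.det = (A.det.re : ℂ) ∧ 0 < A.det.re := by
  have h := hA.det_pos
  rw [Complex.lt_def] at h
  refine ⟨Complex.ext rfl ?_, ?_⟩
  · simp [← h.2]
  · simpa using h.1

/-- Concavity of `log ∘ det` on positive definite complex matrices. -/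
lemma logdet_concave_pair {A B : Matrix n n ℂ} (hA : A.PosDef) (hB : B.PosDef)
    {a b : ℝ} (ha : 0 ≤ a) (hb : 0 ≤ b) (hab : a + b = 1) :
    a * Real.log A.det.re + b * Real.log B.det.re ≤ Real.log (a • A + b • B).det.re := by
  obtain ⟨hAre, hApos⟩ := det_real_of_posDef hA
  obtain ⟨hBre, hBpos⟩ := det_real_of_posDef hB
  set S := CFC.sqrt A with hSdef
  have hSH : S.IsHermitian := (CFC.sqrt_nonneg A).posSemidef.1
  have hSS : S * S = A := CFC.sqrt_mul_sqrt_self A hA.posSemidef.nonneg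
  have hdetS : S.det * S.det = A.det := by rw [← det_mul, hSS]
  have hdetSne : S.det ≠ 0 := by
    intro h; rw [h, mul_zero] at hdetS; exact hA.det_pos.ne' hdetS.symm
  set T := S⁻¹ with hTdef
  have hST : S * T = 1 := mul_nonsing_inv S (isUnit_iff_ne_zero.mpr hdetSne)
  have hTS : T * S = 1 := nonsing_inv_mul S (isUnit_iff_ne_zero.mpr hdetSne)
  have hTH : T.IsHermitian := hSH.inv
  set Mm := T * B * T with hMdef
  have hMps : Mm.PosSemidef := by
    have := hB.posSemidef.mul_mul_conjTranspose_same T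
    rwa [hTH.eq] at this
  have hdetT : T.det = S.det⁻¹ := by
    rw [hTdef, det_nonsing_inv, Ring.inverse_eq_inv]
  have hdetM : A.det * Mm.det = B.det := by
    rw [hMdef, det_mul, det_mul, hdetT, ← hdetS]
    field_simp
  -- eigenvalues of Mm
  set μ := hMps.1.eigenvalues with hμdef
  have hμ0 : ∀ i, 0 ≤ μ i := hMps.eigenvalues_nonneg
  have hdetMeig : Mm.det = ∏ i, (μ i : ℂ) := hMps.1.det_eq_prod_eigenvalues
  have hdetMne : Mm.det ≠ 0 := by
    intro h
    rw [h, mul_zero] at hdetM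
    exact hB.det_pos.ne' hdetM.symm
  have hμpos : ∀ i, 0 < μ i := by
    intro i
    rcases (hμ0 i).eq_or_lt with h | h
    · exact absurd (hdetMeig.trans
        (Finset.prod_eq_zero (Finset.mem_univ i) (by simp [← h]))) hdetMne
    · exact h
  have hcomb : ∀ i, 0 < a + b * μ i := by
    intro i
    rcases ha.eq_or_lt with h | h
    · have hb1 : b = 1 := by linarith
      simp only [← h, hb1, zero_add, one_mul]
      exact hμpos i
    · nlinarith [mul_nonneg hb (hμ0 i)]
  -- decomposition of the combination
  set C := a • (1 : Matrix n n ℂ) + b • Mm with hCdef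
  have hkey : a • A + b • B = S * C * S := by
    have h1 : S * Mm * S = B := by
      rw [hMdef, ← Matrix.mul_assoc, ← Matrix.mul_assoc, hST, Matrix.one_mul,
        Matrix.mul_assoc, hTS, Matrix.mul_one]
    rw [hCdef, Matrix.mul_add, Matrix.add_mul, Matrix.mul_smul, Matrix.smul_mul,
      Matrix.mul_smul, Matrix.smul_mul, Matrix.mul_one, hSS, h1]
  -- determinant of C via spectral theorem of Mm
  set U : Matrix n n ℂ := (Matrix.IsHermitian.eigenvectorUnitary hMps.1 : Matrix n n ℂ) with hUdef
  have hUU : U * star U = 1 :=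
    (Matrix.mem_unitaryGroup_iff).mp (Matrix.IsHermitian.eigenvectorUnitary hMps.1).2
  have hspec : Mm = U * Matrix.diagonal (RCLike.ofReal ∘ μ) * star U :=
    hMps.1.spectral_theorem
  have hCdecomp : C = U * (a • (1 : Matrix n n ℂ)
      + b • Matrix.diagonal (RCLike.ofReal ∘ μ)) * star U := by
    rw [Matrix.mul_add, Matrix.add_mul, Matrix.mul_smul, Matrix.smul_mul,
      Matrix.mul_smul, Matrix.smul_mul, Matrix.mul_one, hUU, hCdef, hspec]
  have hdiag : a • (1 : Matrix n n ℂ) + b • Matrix.diagonal (RCLike.ofReal ∘ μ)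
      = Matrix.diagonal (fun i => ((a + b * μ i : ℝ) : ℂ)) := by
    rw [← Matrix.diagonal_one, ← Matrix.diagonal_smul, ← Matrix.diagonal_smul,
      Matrix.diagonal_add]
    funext i
    simp [Complex.real_smul]
  have hUdet : U.det * (star U).det = 1 := by rw [← det_mul, hUU, det_one]
  have hdetC : C.det = ∏ i, ((a + b * μ i : ℝ) : ℂ) := by
    have h1 : C.det = (Matrix.diagonal fun i => ((a + b * μ i : ℝ) : ℂ)).det
        * (U.det * (star U).det) := by
      rw [hCdecomp, hdiag, det_mul, det_mul]; ring
    rw [h1, hUdet, mul_one, det_diagonal]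
  have hdetComb : (a • A + b • B).det = A.det * C.det := by
    rw [hkey, det_mul, det_mul, ← hdetS]; ring
  have hre : (a • A + b • B).det.re = A.det.re * ∏ i, (a + b * μ i) := by
    rw [hdetComb, hdetC, hAre, ← Complex.ofReal_prod, ← Complex.ofReal_mul, Complex.ofReal_re]
    simp
  have hBprod : B.det.re = A.det.re * ∏ i, μ i := by
    have h1 : B.det = ((A.det.re * ∏ i, μ i : ℝ) : ℂ) := by
      rw [← hdetM, hdetMeig, hAre, ← Complex.ofReal_prod, ← Complex.ofReal_mul]
      simp
    rw [h1, Complex.ofReal_re]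
  have hlogRHS : Real.log ((a • A + b • B).det.re)
      = Real.log A.det.re + ∑ i, Real.log (a + b * μ i) := by
    rw [hre, Real.log_mul hApos.ne' (Finset.prod_pos fun i _ => hcomb i).ne',
      Real.log_prod fun i _ => (hcomb i).ne']
  have hlogB : Real.log B.det.re = Real.log A.det.re + ∑ i, Real.log (μ i) := by
    rw [hBprod, Real.log_mul hApos.ne' (Finset.prod_pos fun i _ => hμpos i).ne',
      Real.log_prod fun i _ => (hμpos i).ne']
  have hterm : ∀ i, b * Real.log (μ i) ≤ Real.log (a + b * μ i) := by
    intro i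
    have h := strictConcaveOn_log_Ioi.concaveOn.2 (Set.mem_Ioi.mpr one_pos)
      (Set.mem_Ioi.mpr (hμpos i)) ha hb hab
    simpa [smul_eq_mul, Real.log_one] using h
  have hsum : b * ∑ i, Real.log (μ i) ≤ ∑ i, Real.log (a + b * μ i) := by
    rw [Finset.mul_sum]
    exact Finset.sum_le_sum fun i _ => hterm i
  have h2 : b * Real.log B.det.re
      = b * Real.log A.det.re + b * ∑ i, Real.log (μ i) := by rw [hlogB]; ring
  have h3 : a * Real.log A.det.re + b * Real.log A.det.re = Real.log A.det.re := by
    rw [← add_mul, hab, one_mul]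
  rw [hlogRHS]
  linarith

end aux

/-- Concavity of `q ↦ log det(I + s R diag(q))` on the nonnegative orthant,
for a Hermitian PSD matrix `R` and `s > 0`. -/
theorem stmt_7 {M : ℕ} (R : Matrix (Fin M) (Fin M) ℂ) (hR : R.PosSemidef)
    (s : ℝ) (hs : 0 < s) :
    ConcaveOn ℝ {q : Fin M → ℝ | ∀ i, 0 ≤ q i}
      (fun q => Real.log
        ((1 + s • (R * Matrix.diagonal (fun i => (q i : ℂ)))).det.re)) := by
  set S := CFC.sqrt R with hSdef
  have hSH : S.IsHermitian := (CFC.sqrt_nonneg R).posSemidef.1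
  have hSS : S * S = R := CFC.sqrt_mul_sqrt_self R hR.nonneg
  have hdet : ∀ q : Fin M → ℝ,
      (1 + s • (R * Matrix.diagonal (fun i => (q i : ℂ)))).det
        = (1 + s • (S * Matrix.diagonal (fun i => (q i : ℂ)) * S)).det := by
    intro q
    have h1 : 1 + s • (R * Matrix.diagonal (fun i => (q i : ℂ)))
        = 1 + S * (s • (S * Matrix.diagonal (fun i => (q i : ℂ)))) := by
      rw [Matrix.mul_smul, ← Matrix.mul_assoc, hSS]
    have h2 : (s • (S * Matrix.diagonal (fun i => (q i : ℂ)))) * S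
        = s • (S * Matrix.diagonal (fun i => (q i : ℂ)) * S) := Matrix.smul_mul _ _ _
    rw [h1, Matrix.det_one_add_mul_comm, h2]
  have hPD : ∀ q : Fin M → ℝ, (∀ i, 0 ≤ q i) →
      (1 + s • (S * Matrix.diagonal (fun i => (q i : ℂ)) * S)).PosDef := by
    intro q hq
    have hD : (Matrix.diagonal (fun i => (q i : ℂ))).PosSemidef :=
      Matrix.PosSemidef.diagonal fun i => Complex.zero_le_real.mpr (hq i)
    have h1 : (S * Matrix.diagonal (fun i => (q i : ℂ)) * S).PosSemidef := by
      have := hD.mul_mul_conjTranspose_same S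
      rwa [hSH.eq] at this
    exact Matrix.PosDef.one.add_posSemidef (smul_posSemidef h1 hs.le)
  have haff : ∀ (x y : Fin M → ℝ) (a b : ℝ), a + b = 1 →
      (1 + s • (S * Matrix.diagonal (fun i => ((a • x + b • y) i : ℂ)) * S))
        = a • (1 + s • (S * Matrix.diagonal (fun i => (x i : ℂ)) * S))
          + b • (1 + s • (S * Matrix.diagonal (fun i => (y i : ℂ)) * S)) := by
    intro x y a b hab
    have hD : Matrix.diagonal (fun i => ((a • x + b • y) i : ℂ))
        = a • Matrix.diagonal (fun i => (x i : ℂ)) + b • Matrix.diagonal (fun i => (y i : ℂ)) := by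
      rw [← Matrix.diagonal_smul, ← Matrix.diagonal_smul, Matrix.diagonal_add]
      funext i
      simp [Complex.real_smul]
    have h1 : (1 : Matrix (Fin M) (Fin M) ℂ) = a • 1 + b • 1 := by
      rw [← add_smul, hab, one_smul]
    rw [hD, Matrix.mul_add, Matrix.add_mul, Matrix.mul_smul, Matrix.smul_mul,
      Matrix.mul_smul, Matrix.smul_mul]
    conv_lhs => rw [h1]
    module
  constructor
  · intro x hx y hy a b ha hb hab i
    simp only [Pi.add_apply, Pi.smul_apply, smul_eq_mul]
    exact add_nonneg (mul_nonneg ha (hx i)) (mul_nonneg hb (hy i))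
  · intro x hx y hy a b ha hb hab
    simp only [smul_eq_mul]
    rw [hdet (a • x + b • y), hdet x, hdet y, haff x y a b hab]
    exact logdet_concave_pair (hPD x hx) (hPD y hy) ha hb hab
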